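/- Let p ∈ OFS, d = gcd(p), and p/d the sequence of entries of p divided by d. Then p/d ∈ OFS, f(p) = d · f(p/d), and fw(p) = d · fw(p/d). -/

import Mathlib

/-- `OFS p`: `p` is a strictly increasing nonempty finite sequence of positive integers. -/
def OFS (p : List ℕ) : Prop := p ≠ [] ∧ p.Pairwise (· < ·) ∧ ∀ x ∈ p, 0 < x

/-- The reduction operation `R`. -/
def R : List ℕ → List ℕ
  | [] => []
  | [a] => [a]
  | a :: b :: rest => (((b :: rest).map (fun x => x - a)).insert a).mergeSort (· ≤ ·)

/-- `max(p)` -/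
def maxL (p : List ℕ) : ℕ := p.foldr max 0

/-- `gcd(p)` -/
def gcdL (p : List ℕ) : ℕ := p.foldr Nat.gcd 0

/-- Fuel-based auxiliary for `f`; `maxL p + 1` fuel always suffices since
`maxL` strictly decreases under `R` for lists of length `> 1`. -/
def faux : ℕ → List ℕ → ℕ
  | _, [] => 0
  | _, [a] => a
  | 0, _ => 0
  | fuel+1, p => p.headI + faux fuel (R p)

/-- The function `f` of Castelli–Mignosi–Restivo: `f p = p₁` if `|p| = 1`,
and `f p = p₁ + f (R p)` otherwise. -/
def f (p : List ℕ) : ℕ := faux (maxL p + 1) p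

/-- The function `fw` of Tijdeman–Zamboni. -/
def fw (p : List ℕ) : ℕ :=
  if h : 1 < p.length ∧ gcdL p.dropLast = gcdL p ∧ f p.dropLast ≤ maxL p
  then fw p.dropLast
  else f p
termination_by p.length
decreasing_by
  simp only [List.length_dropLast]
  omega

/-- The Fine–Wilf graph `G(p,k)` on vertex set `{1,…,k}` (represented by `Fin k`,
with `v : Fin k` standing for the integer `v+1`); `i` and `j` are adjacent iff
`|i - j|` is an entry of `p`. -/
def G (p : List ℕ) (k : ℕ) : SimpleGraph (Fin k) where
  Adj i j := i ≠ j ∧ (((j : ℕ) - (i : ℕ)) ∈ p ∨ ((i : ℕ) - (j : ℕ)) ∈ p)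
  symm := by
    constructor
    intro i j h
    exact ⟨h.1.symm, h.2.symm⟩
  loopless := by
    constructor
    intro i h
    exact h.1 rfl

/-- `p` is trim. -/
def Trim (p : List ℕ) : Prop :=
  p.length = 1 ∨ (1 < p.length ∧
    (gcdL p ≠ gcdL p.dropLast ∨ (gcdL p = gcdL p.dropLast ∧ maxL p < f p.dropLast)))

def Good (p : List ℕ) : Prop := p.Pairwise (· < ·) ∧ ∀ x ∈ p, 0 < x

lemma maxL_cons (a : ℕ) (t : List ℕ) : maxL (a :: t) = max a (maxL t) := rfl
lemma gcdL_cons (a : ℕ) (t : List ℕ) : gcdL (a :: t) = Nat.gcd a (gcdL t) := rfl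

lemma le_maxL {x : ℕ} {l : List ℕ} (h : x ∈ l) : x ≤ maxL l := by
  induction l with
  | nil => cases h
  | cons a t ih =>
    rw [maxL_cons]
    rcases List.mem_cons.1 h with rfl | h
    · exact le_max_left _ _
    · exact le_trans (ih h) (le_max_right _ _)

lemma maxL_lt {M : ℕ} {l : List ℕ} (hM : 0 < M) (h : ∀ x ∈ l, x < M) : maxL l < M := by
  induction l with
  | nil => exact hM
  | cons a t ih =>
    rw [maxL_cons, max_lt_iff]
    exact ⟨h a (List.mem_cons_self), ih fun x hx => h x (List.mem_cons_of_mem _ hx)⟩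

lemma gcdL_dvd {x : ℕ} {l : List ℕ} (h : x ∈ l) : gcdL l ∣ x := by
  induction l with
  | nil => cases h
  | cons a t ih =>
    rw [gcdL_cons]
    rcases List.mem_cons.1 h with rfl | h
    · exact Nat.gcd_dvd_left _ _
    · exact dvd_trans (Nat.gcd_dvd_right _ _) (ih h)

lemma max_mul_left (d a b : ℕ) : max (d*a) (d*b) = d * max a b := by
  rcases le_total a b with h|h
  · rw [max_eq_right h, max_eq_right (Nat.mul_le_mul_left d h)]
  · rw [max_eq_left h, max_eq_left (Nat.mul_le_mul_left d h)]

lemma maxL_map_mul (d : ℕ) (l : List ℕ) : maxL (l.map (fun x => d * x)) = d * maxL l := by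
  induction l with
  | nil => simp [maxL]
  | cons a t ih => rw [List.map_cons, maxL_cons, maxL_cons, ih, max_mul_left]

lemma gcdL_map_mul (d : ℕ) (l : List ℕ) : gcdL (l.map (fun x => d * x)) = d * gcdL l := by
  induction l with
  | nil => simp [gcdL]
  | cons a t ih => rw [List.map_cons, gcdL_cons, gcdL_cons, ih, Nat.gcd_mul_left]

lemma good_cons {a b : ℕ} {t : List ℕ} (h : Good (a :: b :: t)) :
    0 < a ∧ (∀ y ∈ b :: t, a < y) ∧ Good (b :: t) := by
  obtain ⟨hs, hp⟩ := h
  rw [List.pairwise_cons] at hs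
  exact ⟨hp a (List.mem_cons_self), hs.1, hs.2, fun x hx => hp x (List.mem_cons_of_mem _ hx)⟩

lemma mem_R {x a b : ℕ} {t : List ℕ} :
    x ∈ R (a :: b :: t) ↔ x = a ∨ ∃ y ∈ b :: t, y - a = x := by
  rw [R, List.mem_mergeSort, List.mem_insert_iff, List.mem_map]

lemma R_good {a b : ℕ} {t : List ℕ} (h : Good (a :: b :: t)) :
    Good (R (a :: b :: t)) ∧ maxL (R (a :: b :: t)) < maxL (a :: b :: t) := by
  obtain ⟨ha, hlt, hgt⟩ := good_cons h
  have hmem : ∀ x ∈ R (a :: b :: t), 0 < x ∧ x < maxL (a :: b :: t) := by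
    intro x hx
    have hb : b ≤ maxL (a :: b :: t) := le_maxL (by simp)
    rcases mem_R.1 hx with rfl | ⟨y, hy, rfl⟩
    · exact ⟨ha, lt_of_lt_of_le (hlt b (List.mem_cons_self)) hb⟩
    · have hay := hlt y hy
      have hyM : y ≤ maxL (a :: b :: t) := le_maxL (List.mem_cons_of_mem _ hy)
      constructor <;> omega
  have hnd : (R (a :: b :: t)).Nodup := by
    rw [R]
    refine (List.mergeSort_perm _ _).symm.nodup (List.Nodup.insert ?_)
    refine List.Nodup.map_on ?_ (h.1.sublist (List.sublist_cons_self _ _)).nodup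
    intro x hx y hy hxy
    have := hlt x hx; have := hlt y hy; omega
  have hsle : (R (a :: b :: t)).Pairwise (· ≤ ·) := by
    rw [R]; exact List.pairwise_mergeSort' (· ≤ ·) _
  have hslt : (R (a :: b :: t)).Pairwise (· < ·) :=
    (hsle.and hnd).imp fun h => lt_of_le_of_ne h.1 h.2
  have hM : 0 < maxL (a :: b :: t) := lt_of_lt_of_le ha (le_maxL (by simp))
  exact ⟨⟨hslt, fun x hx => (hmem x hx).1⟩, maxL_lt hM fun x hx => (hmem x hx).2⟩

lemma faux_nil (fuel : ℕ) : faux fuel [] = 0 := by cases fuel <;> rfl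
lemma faux_single (fuel a : ℕ) : faux fuel [a] = a := by cases fuel <;> rfl
lemma faux_succ (k a b : ℕ) (t : List ℕ) :
    faux (k+1) (a :: b :: t) = a + faux k (R (a :: b :: t)) := rfl

lemma faux_congr : ∀ n p, Good p → maxL p ≤ n → ∀ fuel fuel', maxL p ≤ fuel → maxL p ≤ fuel' →
    faux fuel p = faux fuel' p := by
  intro n
  induction n with
  | zero =>
    intro p hg hn fuel fuel' _ _
    match p with
    | [] => rw [faux_nil, faux_nil]
    | a :: t =>
      have := hg.2 a (List.mem_cons_self)
      have := le_maxL ((List.mem_cons_self (a := a) (l := t)))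
      omega
  | succ n ih =>
    intro p hg hn fuel fuel' hf hf'
    match p with
    | [] => rw [faux_nil, faux_nil]
    | [a] => rw [faux_single, faux_single]
    | a :: b :: t =>
      have ha : 0 < a := hg.2 a (List.mem_cons_self)
      have haM : a ≤ maxL (a :: b :: t) := le_maxL (List.mem_cons_self)
      obtain ⟨hgR, hMR⟩ := R_good hg
      obtain ⟨k, rfl⟩ : ∃ k, fuel = k + 1 := ⟨fuel - 1, by omega⟩
      obtain ⟨k', rfl⟩ : ∃ k', fuel' = k' + 1 := ⟨fuel' - 1, by omega⟩
      rw [faux_succ, faux_succ, ih (R (a::b::t)) hgR (by omega) k k' (by omega) (by omega)]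

lemma insert_map_mul {d : ℕ} (hd : 0 < d) (a : ℕ) (l : List ℕ) :
    (l.map (fun x => d * x)).insert (d * a) = (l.insert a).map (fun x => d * x) := by
  by_cases h : a ∈ l
  · rw [List.insert_of_mem h, List.insert_of_mem (List.mem_map_of_mem h)]
  · rw [List.insert_of_not_mem h, List.insert_of_not_mem, List.map_cons]
    intro hc
    obtain ⟨y, hy, hxy⟩ := List.mem_map.1 hc
    exact h (by rwa [Nat.eq_of_mul_eq_mul_left hd hxy] at hy)

lemma mergeSort_map_mul (d : ℕ) (l : List ℕ) :
    (l.map (fun x => d * x)).mergeSort (· ≤ ·) =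
      (l.mergeSort (· ≤ ·)).map (fun x => d * x) := by
  refine (fun hp h1 h2 => List.Perm.eq_of_pairwise' h1 h2 hp) ?_ (List.pairwise_mergeSort' (· ≤ ·) _) ?_
  · exact ((List.mergeSort_perm _ _).trans ((List.mergeSort_perm l _).symm.map _)).symm.symm
  · refine List.pairwise_map.2 ((List.pairwise_mergeSort' (· ≤ ·) l).imp ?_)
    exact fun h => Nat.mul_le_mul_left d h

lemma R_map_mul {d : ℕ} (hd : 0 < d) (a b : ℕ) (t : List ℕ) :
    R ((a :: b :: t).map (fun x => d * x)) = (R (a :: b :: t)).map (fun x => d * x) := by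
  show ((((b :: t).map (fun x => d * x)).map (fun x => x - d * a)).insert (d * a)).mergeSort _ = _
  rw [List.map_map]
  have : ((fun x => x - d * a) ∘ fun x => d * x) = (fun x => d * x) ∘ (fun x => x - a) := by
    funext x
    simp only [Function.comp_apply]
    exact (Nat.mul_sub d x a).symm
  rw [this, ← List.map_map, insert_map_mul hd, mergeSort_map_mul, R]

lemma faux_scale {d : ℕ} (hd : 0 < d) :
    ∀ fuel p, faux fuel (p.map (fun x => d * x)) = d * faux fuel p := by
  intro fuel
  induction fuel with
  | zero =>
    intro p
    match p with
    | [] => simp [faux_nil]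
    | [a] => simp [faux_single]
    | a :: b :: t =>
      show faux 0 (d*a :: d*b :: (t.map _)) = d * faux 0 (a :: b :: t)
      rfl
  | succ k ih =>
    intro p
    match p with
    | [] => simp [faux_nil]
    | [a] => simp [faux_single]
    | a :: b :: t =>
      show faux (k+1) (d*a :: d*b :: (t.map _)) = d * faux (k+1) (a :: b :: t)
      rw [faux_succ, faux_succ, Nat.mul_add]
      congr 1
      have : (d*b :: t.map (fun x => d * x)) = (b :: t).map (fun x => d * x) := rfl
      rw [show (d*a :: d*b :: t.map (fun x => d * x)) = (a :: b :: t).map (fun x => d * x) from rfl,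
        R_map_mul hd, ih]

lemma good_map_mul {d : ℕ} (hd : 0 < d) {p : List ℕ} (hg : Good p) :
    Good (p.map (fun x => d * x)) := by
  constructor
  · exact List.pairwise_map.2 (hg.1.imp fun h => by
      exact (Nat.mul_lt_mul_left hd).2 h)
  · intro x hx
    obtain ⟨y, hy, rfl⟩ := List.mem_map.1 hx
    exact Nat.mul_pos hd (hg.2 y hy)

lemma f_scale {d : ℕ} (hd : 0 < d) {p : List ℕ} (hg : Good p) :
    f (p.map (fun x => d * x)) = d * f p := by
  rw [f, f, maxL_map_mul, faux_scale hd]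
  congr 1
  exact faux_congr (d * maxL p) p hg (Nat.le_mul_of_pos_left _ hd) _ _
    (by have := Nat.le_mul_of_pos_left (maxL p) hd; omega) (by omega)

lemma good_sublist {p q : List ℕ} (h : q.Sublist p) (hg : Good p) : Good q :=
  ⟨hg.1.sublist h, fun x hx => hg.2 x (h.mem hx)⟩

lemma fw_scale {d : ℕ} (hd : 0 < d) : ∀ n p, p.length ≤ n → Good p →
    fw (p.map (fun x => d * x)) = d * fw p := by
  intro n
  induction n with
  | zero =>
    intro p hn _
    have : p = [] := List.length_eq_zero_iff.1 (by omega)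
    subst this
    have h0 : fw ([] : List ℕ) = 0 := by
      rw [fw, dif_neg (by simp), f, faux_nil]
    simp [h0]
  | succ n ih =>
    intro p hn hg
    have hc : (1 < (p.map (fun x => d * x)).length ∧
        gcdL (p.map (fun x => d * x)).dropLast = gcdL (p.map (fun x => d * x)) ∧
        f (p.map (fun x => d * x)).dropLast ≤ maxL (p.map (fun x => d * x))) ↔
        (1 < p.length ∧ gcdL p.dropLast = gcdL p ∧ f p.dropLast ≤ maxL p) := by
      rw [List.length_map, ← List.map_dropLast, gcdL_map_mul, gcdL_map_mul, maxL_map_mul,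
        f_scale hd (good_sublist (List.dropLast_sublist p) hg)]
      constructor
      · rintro ⟨h1, h2, h3⟩
        exact ⟨h1, Nat.eq_of_mul_eq_mul_left hd h2, Nat.le_of_mul_le_mul_left h3 hd⟩
      · rintro ⟨h1, h2, h3⟩
        exact ⟨h1, by rw [h2], Nat.mul_le_mul_left d h3⟩
    by_cases h : 1 < p.length ∧ gcdL p.dropLast = gcdL p ∧ f p.dropLast ≤ maxL p
    · conv_lhs => rw [fw]
      conv_rhs => rw [fw]
      rw [dif_pos (hc.2 h), dif_pos h, ← List.map_dropLast]
      have hlen : p.dropLast.length ≤ n := by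
        rw [List.length_dropLast]; omega
      exact ih p.dropLast hlen (good_sublist (List.dropLast_sublist p) hg)
    · conv_lhs => rw [fw]
      conv_rhs => rw [fw]
      rw [dif_neg (fun hx => h (hc.1 hx)), dif_neg h, f_scale hd hg]

theorem f_fw_reduced (p : List ℕ) (hp : OFS p) :
    OFS (p.map (fun x => x / gcdL p)) ∧
    f p = gcdL p * f (p.map (fun x => x / gcdL p)) ∧
    fw p = gcdL p * fw (p.map (fun x => x / gcdL p)) := by
  obtain ⟨hne, hs, hpos⟩ := hp
  have hd : 0 < gcdL p := by
    match p, hne with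
    | a :: t, _ =>
      exact Nat.pos_of_dvd_of_pos (gcdL_dvd ((List.mem_cons_self (a := a) (l := t))))
        (hpos a ((List.mem_cons_self (a := a) (l := t))))
  have hpq : (p.map (fun x => x / gcdL p)).map (fun x => gcdL p * x) = p := by
    rw [List.map_map]
    conv_rhs => rw [← List.map_id p]
    refine List.map_congr_left ?_
    intro x hx
    exact Nat.mul_div_cancel' (gcdL_dvd hx)
  have hgq : Good (p.map (fun x => x / gcdL p)) := by
    constructor
    · refine List.pairwise_map.2 (List.Pairwise.imp_of_mem ?_ hs)
      intro a b _ hb hab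
      exact Nat.div_lt_div_of_lt_of_dvd (gcdL_dvd hb) hab
    · intro x hx
      obtain ⟨y, hy, rfl⟩ := List.mem_map.1 hx
      exact Nat.div_pos (Nat.le_of_dvd (hpos y hy) (gcdL_dvd hy)) hd
  refine ⟨⟨by simp [hne], hgq.1, hgq.2⟩, ?_, ?_⟩
  · conv_lhs => rw [← hpq]
    exact f_scale hd hgq
  · conv_lhs => rw [← hpq]
    exact fw_scale hd _ _ (le_refl _) hgq
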